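/- arXiv:1009.1444 — 5 statements merged into one kernel-verified Lean document; each statement's English description precedes it below -/
import Mathlib

section
/- Let M be an m×m positive definite real symmetric matrix and z ∈ ℝ. Then tr(M⁻¹) ≤ z if and only if there exist real numbers u₁,…,u_m with z ≥ u₁+⋯+u_m and, for each k, the block matrix [[M, e_k],[e_kᵀ, u_k]] is positive semidefinite. -/
open Matrix

/-!
By the Schur complement, the `k`-th block matrix is positive semidefinite exactly when
`u k ≥ e_kᵀ M⁻¹ e_k = M⁻¹ k k`. So admissible `u` are precisely those dominating the diagonal of
`M⁻¹` entrywise, and the smallest possible `∑ k, u k` is `(M⁻¹).trace`.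
-/

variable {ι n R : Type*} [CommRing R] [PartialOrder R] [StarRing R] [StarOrderedRing R]

theorem Matrix.posSemidef_of_const_iff [Unique ι] {a : R} :
    (of fun (_ : ι) (_ : ι) => a).PosSemidef ↔ 0 ≤ a := by
  classical
  have : (of fun (_ : ι) (_ : ι) => a) = diagonal fun _ => a := by
    ext i j
    rw [Subsingleton.elim i j]
    simp
  rw [this, posSemidef_diagonal_iff]
  exact ⟨fun h => h default, fun h _ => h⟩

theorem Matrix.replicateRow_mul_mul_replicateCol {α : Type*} [CommSemiring α] [Fintype n]
    (A : Matrix n n α) (v w : n → α) :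
    replicateRow ι v * A * replicateCol ι w = of fun _ _ => v ⬝ᵥ A *ᵥ w := by
  rw [Matrix.mul_assoc]
  ext
  simp [mul_apply, dotProduct, mulVec]

theorem Matrix.PosDef.fromBlocks_replicateCol_posSemidef_iff [Unique ι] [Fintype n] [DecidableEq n]
    {M : Matrix n n R} (hM : M.PosDef) [Invertible M] (v : n → R) (u : R) :
    (fromBlocks M (replicateCol ι v) (replicateRow ι (star v)) (of fun _ _ => u)).PosSemidef ↔
      star v ⬝ᵥ M⁻¹ *ᵥ v ≤ u := by
  rw [← conjTranspose_replicateCol, hM.fromBlocks₁₁, conjTranspose_replicateCol,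
    replicateRow_mul_mul_replicateCol]
  exact (posSemidef_of_const_iff (ι := ι) (a := u - star v ⬝ᵥ M⁻¹ *ᵥ v)).trans sub_nonneg

theorem trace_inv_le_iff_exists_blocks_posSemidef
    {m : ℕ} (M : Matrix (Fin m) (Fin m) ℝ) (hM : M.PosDef) (z : ℝ) :
    (M⁻¹).trace ≤ z ↔
      ∃ u : Fin m → ℝ, (∑ k, u k) ≤ z ∧
        ∀ k : Fin m,
          (Matrix.fromBlocks M
            (Matrix.of fun i (_ : Fin 1) => (Pi.single k 1 : Fin m → ℝ) i)
            (Matrix.of fun (_ : Fin 1) j => (Pi.single k 1 : Fin m → ℝ) j)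
            (Matrix.of fun (_ : Fin 1) (_ : Fin 1) => u k)).PosSemidef := by
  have := hM.isUnit.invertible
  have block_iff (k : Fin m) (u : ℝ) :
      (fromBlocks M (replicateCol (Fin 1) (Pi.single k 1)) (replicateRow (Fin 1) (Pi.single k 1))
        (of fun _ _ => u)).PosSemidef ↔ M⁻¹ k k ≤ u := by
    simpa using hM.fromBlocks_replicateCol_posSemidef_iff (ι := Fin 1) (Pi.single k 1) u
  constructor
  · exact fun h => ⟨fun k => M⁻¹ k k, h, fun k => (block_iff k _).2 le_rfl⟩
  · rintro ⟨u, hsum, hblocks⟩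
    exact (Finset.sum_le_sum fun k _ => (block_iff k (u k)).1 (hblocks k)).trans hsum
end

section
/- Lukács' theorem (even degree case): a real polynomial p of degree n = 2k is nonnegative on the interval [a,b] (with a < b) if and only if p(t) = r(t)² + (t−a)(b−t)·q(t)² for some real polynomials r of degree at most k and q of degree at most k−1. -/
/-!
On `[a, b]` a root `c ∈ (a, b)` of `p ≥ 0` is a local minimum, hence a double root. So if `p` has
no such root, any quadratic factor `(X - c)(X - d)` with real roots has `c, d ∉ (a, b)`, and up to
a nonzero scalar each `X - c` is then `f² (X - a) + g² (b - X)`; the product of two such linear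
forms is `(f₁f₂ (X - a) + g₁g₂ (b - X))² + (X - a)(b - X)(f₁g₂ - g₁f₂)²`. A real-irreducible
quadratic `F` becomes a perfect square after subtracting a suitable positive multiple of
`(X - a)(b - X)`. In every case `p = F G` with `F = s² + (X - a)(b - X) u²` and `G ≥ 0` on `[a, b]`,
and these representations are multiplicative:
`(r² + w q²)(r'² + w q'²) = (r r' - w q q')² + w (r q' + q r')²`. Induct on the degree.
-/

open Polynomial Set

theorem exists_pos_quadratic_eq_zero {A B D : ℝ} (hA : 0 < A) (hD : D < 0) :
    ∃ x > 0, A * (x * x) + B * x + D = 0 := by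
  have hdisc : B ^ 2 < discrim A B D := by unfold discrim; nlinarith
  have hB : B < √(discrim A B D) := Real.lt_sqrt_of_sq_lt hdisc
  exact ⟨(-B + √(discrim A B D)) / (2 * A), by apply div_pos <;> linarith,
    (quadratic_eq_zero_iff hA.ne' (Real.mul_self_sqrt ((sq_nonneg B).trans hdisc.le)).symm _).mpr
      (Or.inl rfl)⟩

theorem quadratic_eq_sq_of_discrim_eq_zero {A B D : ℝ} (hA : 0 < A) (h : discrim A B D = 0) :
    C A * X ^ 2 + C B * X + C D = (C √A * X + C (B / (2 * √A))) ^ 2 := by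
  have hsA : 0 < √A := Real.sqrt_pos.mpr hA
  have h₂ : C √A ^ 2 = C A := by rw [← C_pow, Real.sq_sqrt hA.le]
  have h₁ : 2 * C √A * C (B / (2 * √A)) = C B := by
    rw [← C_ofNat, ← C_mul, ← C_mul]; congr 1; field_simp
  have h₀ : C (B / (2 * √A)) ^ 2 = C D := by
    rw [← C_pow]; congr 1
    unfold discrim at h
    rw [div_pow, mul_pow, Real.sq_sqrt hA.le]; field_simp; linarith
  linear_combination (-X ^ 2) * h₂ - X * h₁ - h₀

theorem sq_X_sub_C_dvd_of_isLocalMin {p : ℝ[X]} {c : ℝ}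
    (hmin : IsLocalMin (fun x => p.eval x) c) (hc : p.IsRoot c) : (X - C c) ^ 2 ∣ p := by
  rcases eq_or_ne p 0 with rfl | hp
  · exact dvd_zero _
  have hderiv : (derivative p).IsRoot c := by simpa [Polynomial.deriv] using hmin.deriv_eq_zero
  exact (le_rootMultiplicity_iff hp).mp ((one_lt_rootMultiplicity_iff_isRoot hp).mpr ⟨hc, hderiv⟩)

theorem exists_real_root_or_nonreal_root {p : ℝ[X]} (hp : 0 < p.natDegree) :
    (∃ c : ℝ, p.IsRoot c) ∨ ∃ z : ℂ, z.im ≠ 0 ∧ aeval z p = 0 := by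
  obtain ⟨z, hz⟩ := Complex.exists_root (f := p.map (algebraMap ℝ ℂ))
    (by rwa [degree_map, ← natDegree_pos_iff_degree_pos])
  rw [IsRoot, eval_map_algebraMap] at hz
  by_cases him : z.im = 0
  · have hre : algebraMap ℝ ℂ z.re = z := Complex.ext rfl (by simp [him])
    rw [← hre, aeval_algebraMap_apply_eq_algebraMap_eval] at hz
    exact Or.inl ⟨z.re, (map_eq_zero_iff _ (algebraMap ℝ ℂ).injective).mp hz⟩
  · exact Or.inr ⟨z, him, hz⟩

theorem exists_quadratic_dvd {p : ℝ[X]} (hp : 2 ≤ p.natDegree) :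
    (∃ c d : ℝ, (X - C c) * (X - C d) ∣ p) ∨
      ∃ z : ℂ, z.im ≠ 0 ∧ X ^ 2 - C (2 * z.re) * X + C (‖z‖ ^ 2) ∣ p := by
  have of_nonreal {q : ℝ[X]} (hq : q ∣ p) {z : ℂ} (hz : z.im ≠ 0) (hzq : aeval z q = 0) :
      ∃ z : ℂ, z.im ≠ 0 ∧ X ^ 2 - C (2 * z.re) * X + C (‖z‖ ^ 2) ∣ p :=
    ⟨z, hz, (q.quadratic_dvd_of_aeval_eq_zero_im_ne_zero hzq hz).trans hq⟩
  obtain ⟨c, hc⟩ | ⟨z, hz, hzp⟩ := exists_real_root_or_nonreal_root (by omega : 0 < p.natDegree)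
  · obtain ⟨p₁, rfl⟩ := dvd_iff_isRoot.mpr hc
    have hp₁ : 0 < p₁.natDegree := by
      have := natDegree_mul_le (p := X - C c) (q := p₁)
      rw [natDegree_X_sub_C] at this
      omega
    obtain ⟨d, hd⟩ | ⟨z, hz, hzp⟩ := exists_real_root_or_nonreal_root hp₁
    · exact .inl ⟨c, d, mul_dvd_mul_left _ (dvd_iff_isRoot.mpr hd)⟩
    · exact .inr <| of_nonreal (dvd_mul_left _ _) hz hzp
  · exact .inr <| of_nonreal dvd_rfl hz hzp

section Interval

variable {a b : ℝ}

theorem eval_nonneg_on_Icc_of_mul {F G : ℝ[X]} (hab : a ≠ b) (hF0 : F ≠ 0)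
    (hF : ∀ t ∈ Icc a b, 0 ≤ F.eval t) (hFG : ∀ t ∈ Icc a b, 0 ≤ (F * G).eval t) :
    ∀ t ∈ Icc a b, 0 ≤ G.eval t := by
  have hdense : Dense {x | F.IsRoot x}ᶜ :=
    (F.finite_setOfPred_isRoot hF0).countable.dense_compl ℝ
  have hsub : Ioo a b ∩ {x | F.IsRoot x}ᶜ ⊆ {t | 0 ≤ G.eval t} := by
    rintro t ⟨ht, hroot⟩
    have hpos : 0 < F.eval t := (hF t (Ioo_subset_Icc_self ht)).lt_of_ne' hroot
    have hFGt := hFG t (Ioo_subset_Icc_self ht)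
    rw [eval_mul] at hFGt
    exact (mul_nonneg_iff_of_pos_left hpos).mp hFGt
  rw [← closure_Ioo hab]
  exact (closure_minimal (hdense.open_subset_closure_inter isOpen_Ioo) isClosed_closure).trans
    (closure_minimal hsub (isClosed_le continuous_const G.continuous))

theorem eval_sq_add_mul_sq_nonneg (r q : ℝ[X]) {t : ℝ} (ht : t ∈ Icc a b) :
    0 ≤ (r ^ 2 + (X - C a) * (C b - X) * q ^ 2).eval t := by
  have hw : 0 ≤ (t - a) * (b - t) := mul_nonneg (by linarith [ht.1]) (by linarith [ht.2])
  simp only [eval_add, eval_mul, eval_pow, eval_sub, eval_X, eval_C]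
  positivity

-- `(b - a)(X - c) = (b - c)(X - a) + (a - c)(b - X)`, and for `c ∉ (a, b)` both coefficients
-- have the same sign.
theorem exists_C_mul_X_sub_C_eq (hab : a < b) {c : ℝ} (hc : c ∉ Ioo a b) :
    ∃ ε f g : ℝ, ε ≠ 0 ∧ C ε * (X - C c) = (X - C a) * C f ^ 2 + (C b - X) * C g ^ 2 := by
  simp only [← C_pow]
  rcases le_or_gt c a with hca | hac
  · refine ⟨b - a, √(b - c), √(a - c), by linarith, ?_⟩
    rw [Real.sq_sqrt (by linarith), Real.sq_sqrt (by linarith)]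
    simp only [map_sub]; ring
  · have hbc : b ≤ c := not_lt.mp fun h => hc ⟨hac, h⟩
    refine ⟨a - b, √(c - b), √(c - a), by linarith, ?_⟩
    rw [Real.sq_sqrt (by linarith), Real.sq_sqrt (by linarith)]
    simp only [map_sub]; ring

-- `q.degree < k` rather than `q.natDegree ≤ k - 1`: for `k = 0` it forces `q = 0`, as
-- `IsLukacs.mul` needs.
def IsLukacs (a b : ℝ) (k : ℕ) (p : ℝ[X]) : Prop :=
  ∃ r q : ℝ[X], r.degree ≤ k ∧ q.degree < k ∧ p = r ^ 2 + (X - C a) * (C b - X) * q ^ 2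

theorem IsLukacs.eval_nonneg {k : ℕ} {p : ℝ[X]} (hp : IsLukacs a b k p) :
    ∀ t ∈ Icc a b, 0 ≤ p.eval t := by
  obtain ⟨r, q, -, -, rfl⟩ := hp
  exact fun t ht => eval_sq_add_mul_sq_nonneg r q ht

theorem IsLukacs.mul {j k : ℕ} {p p' : ℝ[X]} (hp : IsLukacs a b j p) (hp' : IsLukacs a b k p') :
    IsLukacs a b (j + k) (p * p') := by
  obtain ⟨r, q, hr, hq, rfl⟩ := hp
  obtain ⟨r', q', hr', hq', rfl⟩ := hp'
  refine ⟨r * r' - (X - C a) * (C b - X) * q * q', r * q' + q * r', ?_, ?_, by ring⟩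
  · have hw : ((X - C a) * (C b - X)).degree ≤ 1 + 1 := by compute_degree!
    refine (degree_sub_le _ _).trans (max_le ?_ ?_)
    · exact (degree_mul_le_of_le hr hr').trans_eq (by push_cast; rfl)
    · calc _ ≤ 1 + 1 + q.degree + q'.degree :=
            degree_mul_le_of_le (degree_mul_le_of_le hw le_rfl) le_rfl
        _ = (q.degree + 1) + (q'.degree + 1) := by abel
        _ ≤ j + k :=
            add_le_add (Nat.WithBot.add_one_le_of_lt hq) (Nat.WithBot.add_one_le_of_lt hq')
        _ = _ := by push_cast; rfl
  · push_cast
    refine (degree_add_le _ _).trans_lt (max_lt ?_ ?_)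
    · exact (degree_mul_le_of_le hr le_rfl).trans_lt
        (WithBot.add_lt_add_left (WithBot.natCast_ne_bot j) hq')
    · exact (degree_mul_le_of_le le_rfl hr').trans_lt
        (WithBot.add_lt_add_right (WithBot.natCast_ne_bot k) hq)

theorem isLukacs_zero_C {c : ℝ} (hc : 0 ≤ c) : IsLukacs a b 0 (C c) :=
  ⟨C √c, 0, degree_C_le, by simp, by rw [← C_pow, Real.sq_sqrt hc]; ring⟩

theorem isLukacs_one_of_degree_le {s : ℝ[X]} (hs : s.degree ≤ 1) (u : ℝ) :
    IsLukacs a b 1 (s ^ 2 + (X - C a) * (C b - X) * C u ^ 2) :=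
  ⟨s, C u, by exact_mod_cast hs, degree_C_le.trans_lt (by norm_num), rfl⟩

theorem isLukacs_one_of_discrim_neg (hab : a ≠ b) {α β γ : ℝ} (hα : 0 < α)
    (hdisc : discrim α β γ < 0) : IsLukacs a b 1 (C α * X ^ 2 + C β * X + C γ) := by
  -- The discriminant of `F - v (X - a)(b - X)` is a quadratic in `v` with leading coefficient
  -- `(b - a)²` and value `discrim α β γ < 0` at `v = 0`, so it vanishes at some `v > 0`.
  obtain ⟨v, hv, hroot⟩ := exists_pos_quadratic_eq_zero
    (B := -(2 * β * (a + b) + 4 * α * a * b + 4 * γ))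
    (sq_pos_of_ne_zero (sub_ne_zero.mpr hab.symm)) hdisc
  have hsquare : discrim (α + v) (β - v * (a + b)) (γ + v * a * b) = 0 := by
    unfold discrim at *; linear_combination hroot
  have h := isLukacs_one_of_degree_le (a := a) (b := b)
    (s := C √(α + v) * X + C ((β - v * (a + b)) / (2 * √(α + v)))) (by compute_degree) √v
  rw [← quadratic_eq_sq_of_discrim_eq_zero (by linarith) hsquare, ← C_pow, Real.sq_sqrt hv.le]
    at h
  convert h using 1
  simp only [map_add, map_sub, map_mul]
  ring

theorem isLukacs_one_of_im_ne_zero (hab : a ≠ b) {z : ℂ} (hz : z.im ≠ 0) :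
    IsLukacs a b 1 (X ^ 2 - C (2 * z.re) * X + C (‖z‖ ^ 2)) := by
  have hdisc : discrim 1 (-(2 * z.re)) (‖z‖ ^ 2) < 0 := by
    rw [Complex.sq_norm, Complex.normSq_apply, discrim]
    nlinarith [sq_pos_of_ne_zero hz]
  convert isLukacs_one_of_discrim_neg hab one_pos hdisc using 1
  rw [map_neg, C_1]; ring

theorem exists_isLukacs_one_C_mul (hab : a < b) {c d : ℝ} (hc : c ∉ Ioo a b) (hd : d ∉ Ioo a b) :
    ∃ ε ≠ 0, IsLukacs a b 1 (C ε * ((X - C c) * (X - C d))) := by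
  obtain ⟨ε₁, f₁, g₁, hε₁, h₁⟩ := exists_C_mul_X_sub_C_eq hab hc
  obtain ⟨ε₂, f₂, g₂, hε₂, h₂⟩ := exists_C_mul_X_sub_C_eq hab hd
  refine ⟨ε₁ * ε₂, mul_ne_zero hε₁ hε₂, ?_⟩
  convert isLukacs_one_of_degree_le (a := a) (b := b)
    (s := (X - C a) * C (f₁ * f₂) + (C b - X) * C (g₁ * g₂)) (by compute_degree)
    (f₁ * g₂ - g₁ * f₂) using 1
  rw [C_mul, show C ε₁ * C ε₂ * ((X - C c) * (X - C d)) =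
    (C ε₁ * (X - C c)) * (C ε₂ * (X - C d)) by ring, h₁, h₂]
  simp only [map_mul, map_sub]
  ring

theorem exists_isLukacs_one_quadratic_dvd (hab : a < b) {p : ℝ[X]}
    (hp : ∀ t ∈ Icc a b, 0 ≤ p.eval t) (hdeg : 2 ≤ p.natDegree) :
    ∃ F G : ℝ[X], F.natDegree = 2 ∧ IsLukacs a b 1 F ∧ p = F * G := by
  by_cases hinterior : ∃ c ∈ Ioo a b, p.IsRoot c
  · obtain ⟨c, hc, hroot⟩ := hinterior
    have hmin : IsLocalMin (fun x => p.eval x) c :=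
      Filter.eventually_of_mem (Icc_mem_nhds hc.1 hc.2) fun t ht =>
        hroot.eq_zero.le.trans (hp t ht)
    obtain ⟨G, hG⟩ := sq_X_sub_C_dvd_of_isLocalMin hmin hroot
    refine ⟨_, G, by compute_degree!, ?_, hG⟩
    simpa using isLukacs_one_of_degree_le (a := a) (b := b) (s := X - C c) (by compute_degree) 0
  push Not at hinterior
  obtain ⟨c, d, hcd⟩ | ⟨z, hz, G, hG⟩ := exists_quadratic_dvd hdeg
  · have houtside {x : ℝ} (hx : X - C x ∣ p) : x ∉ Ioo a b :=
      fun h => hinterior x h (dvd_iff_isRoot.mp hx)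
    obtain ⟨ε, hε, hF⟩ := exists_isLukacs_one_C_mul hab
      (houtside (dvd_of_mul_right_dvd hcd)) (houtside (dvd_of_mul_left_dvd hcd))
    obtain ⟨G, hG⟩ := hcd
    refine ⟨_, C ε⁻¹ * G, by compute_degree!, hF, ?_⟩
    have hεε : C ε * C ε⁻¹ = 1 := by rw [← C_mul, mul_inv_cancel₀ hε, C_1]
    linear_combination hG - (X - C c) * (X - C d) * G * hεε
  · exact ⟨_, G, by compute_degree!, isLukacs_one_of_im_ne_zero hab.ne hz, hG⟩

theorem isLukacs_of_nonneg (hab : a < b) (k : ℕ) {p : ℝ[X]} (hdeg : p.natDegree = 2 * k)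
    (hp : ∀ t ∈ Icc a b, 0 ≤ p.eval t) : IsLukacs a b k p := by
  induction k generalizing p with
  | zero =>
    rw [eq_C_of_natDegree_eq_zero hdeg] at hp ⊢
    exact isLukacs_zero_C (by simpa using hp a ⟨le_rfl, hab.le⟩)
  | succ k ih =>
    obtain ⟨F, G, hF2, hF, rfl⟩ := exists_isLukacs_one_quadratic_dvd hab hp (by omega)
    have hF0 : F ≠ 0 := ne_zero_of_natDegree_gt (n := 0) (by omega)
    have hG0 : G ≠ 0 := by rintro rfl; simp at hdeg
    rw [natDegree_mul hF0 hG0, hF2] at hdeg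
    have hG := ih (by omega) (eval_nonneg_on_Icc_of_mul hab.ne hF0 hF.eval_nonneg hp)
    simpa [add_comm] using hF.mul hG

end Interval

theorem lukacs_even (p : Polynomial ℝ) (k : ℕ) (hdeg : p.natDegree = 2 * k)
    (a b : ℝ) (hab : a < b) :
    (∀ t ∈ Set.Icc a b, 0 ≤ p.eval t) ↔
      ∃ r q : Polynomial ℝ, r.natDegree ≤ k ∧ q.natDegree ≤ k - 1 ∧
        p = r ^ 2 + (X - C a) * (C b - X) * q ^ 2 := by
  constructor
  · intro hp
    obtain ⟨r, q, hr, hq, rfl⟩ := isLukacs_of_nonneg hab k hdeg hp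
    refine ⟨r, q, natDegree_le_of_degree_le hr, ?_, rfl⟩
    rcases eq_or_ne q 0 with rfl | hq0
    · simp
    · have := (natDegree_lt_iff_degree_lt hq0).mpr hq
      omega
  · rintro ⟨r, q, -, -, rfl⟩ t ht
    exact eval_sq_add_mul_sq_nonneg r q ht
end

section
/- Let p be a nonzero real polynomial of degree d that is nonnegative on a set I ⊆ ℝ which is the union of k₁ singletons and k₂ nondegenerate closed intervals, all pairwise disjoint. Then the number of distinct zeros of p lying in I is at most min((k₁ + 2k₂ + d)/2, d). -/
/-!
Every zero of `p` in `I` that is neither a singleton `s j` nor an endpoint `a i`, `b i` lies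
in the interior of some `[a i, b i] ⊆ I`, where `p ≥ 0` makes it a local minimum and hence a
root of `p'`, i.e. a zero of multiplicity at least two. At most `k₁ + 2 k₂` zeros are of the
first kind, so if `m` zeros lie in `I`, counting multiplicities against `d` gives `m ≤ d` and
`2 m ≤ k₁ + 2 k₂ + d`.
-/

open Polynomial Finset

namespace Polynomial

variable {R : Type*} [CommRing R] [IsDomain R]

theorem sum_rootMultiplicity_le_natDegree (p : R[X]) (Z : Finset R) :
    ∑ t ∈ Z, p.rootMultiplicity t ≤ p.natDegree := by
  classical
  calc ∑ t ∈ Z, p.rootMultiplicity t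
      = ∑ t ∈ Z, p.roots.count t := Finset.sum_congr rfl fun t _ => (count_roots p).symm
    _ ≤ ∑ t ∈ Z ∪ p.roots.toFinset, p.roots.count t :=
        Finset.sum_le_sum_of_subset Finset.subset_union_left
    _ = Multiset.card p.roots :=
        Multiset.sum_count_eq_card fun t ht => Finset.mem_union_right _ (Multiset.mem_toFinset.2 ht)
    _ ≤ p.natDegree := p.card_roots'

theorem card_add_card_sdiff_le_natDegree [DecidableEq R] {p : R[X]} (hp : p ≠ 0)
    {Z B : Finset R} (hZ : ∀ t ∈ Z, p.IsRoot t)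
    (hB : ∀ t ∈ Z \ B, 1 < p.rootMultiplicity t) :
    #Z + #(Z \ B) ≤ p.natDegree :=
  calc #Z + #(Z \ B) = ∑ _t ∈ Z ∩ B, 1 + ∑ _t ∈ Z \ B, 2 := by
        rw [← Finset.card_inter_add_card_sdiff Z B]
        simp only [Finset.sum_const, smul_eq_mul]
        ring
    _ ≤ ∑ t ∈ Z ∩ B, p.rootMultiplicity t + ∑ t ∈ Z \ B, p.rootMultiplicity t := by
        gcongr with t ht t ht
        · exact (rootMultiplicity_pos hp).2 (hZ t (Finset.mem_inter.1 ht).1)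
        · exact hB t ht
    _ = ∑ t ∈ Z, p.rootMultiplicity t := Finset.sum_inter_add_sum_sdiff Z B _
    _ ≤ p.natDegree := p.sum_rootMultiplicity_le_natDegree Z

theorem one_lt_rootMultiplicity_of_isLocalMin {p : ℝ[X]} (hp : p ≠ 0) {t : ℝ}
    (ht : p.IsRoot t) (hmin : IsLocalMin (fun x => p.eval x) t) :
    1 < p.rootMultiplicity t := by
  have hderiv : p.derivative.IsRoot t := by
    simpa only [Polynomial.deriv, IsRoot.def] using hmin.deriv_eq_zero
  exact (one_lt_rootMultiplicity_iff_isRoot hp).2 ⟨ht, hderiv⟩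

end Polynomial

theorem mem_interior_iUnion_singleton_Icc {ι κ : Type*} {s : ι → ℝ} {a b : κ → ℝ} {t : ℝ}
    (ht : t ∈ ⋃ i, Sum.elim (fun j => {s j}) (fun i => Set.Icc (a i) (b i)) i)
    (hs : t ∉ Set.range s) (ha : t ∉ Set.range a) (hb : t ∉ Set.range b) :
    t ∈ interior (⋃ i, Sum.elim (fun j => {s j}) (fun i => Set.Icc (a i) (b i)) i) := by
  obtain ⟨j | i, hti⟩ := Set.mem_iUnion.1 ht
  · exact absurd ⟨j, (Set.mem_singleton_iff.1 hti).symm⟩ hs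
  · have hIoo : t ∈ interior (Set.Icc (a i) (b i)) := by
      rw [interior_Icc]
      exact ⟨hti.1.lt_of_ne fun h => ha ⟨i, h⟩, hti.2.lt_of_ne fun h => hb ⟨i, h.symm⟩⟩
    exact interior_mono (Set.subset_iUnion_of_subset (Sum.inr i) subset_rfl) hIoo

theorem card_image_union_image_union_image_le {ι κ : Type*} [Fintype ι] [Fintype κ]
    {β : Type*} [DecidableEq β] (s : ι → β) (a b : κ → β) :
    #(univ.image s ∪ univ.image a ∪ univ.image b) ≤ Fintype.card ι + 2 * Fintype.card κ :=
  calc #(univ.image s ∪ univ.image a ∪ univ.image b)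
      ≤ #(univ.image s) + #(univ.image a) + #(univ.image b) :=
        (card_union_le _ _).trans (Nat.add_le_add_right (card_union_le _ _) _)
    _ ≤ #(univ : Finset ι) + #(univ : Finset κ) + #(univ : Finset κ) := by
        gcongr <;> exact card_image_le
    _ = Fintype.card ι + 2 * Fintype.card κ := by
        simp only [card_univ]
        ring

theorem card_zeros_le_of_nonneg_on_union_general
    (p : Polynomial ℝ) (hp : p ≠ 0) (d k₁ k₂ : ℕ) (hdeg : p.natDegree = d)
    (s : Fin k₁ → ℝ) (a b : Fin k₂ → ℝ)
    (F : Fin k₁ ⊕ Fin k₂ → Set ℝ)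
    (hF : F = Sum.elim (fun j => {s j}) (fun i => Set.Icc (a i) (b i)))
    (I : Set ℝ) (hI : I = ⋃ i, F i)
    (hnonneg : ∀ t ∈ I, 0 ≤ p.eval t) :
    (({t ∈ I | p.eval t = 0}.ncard : ℝ)) ≤
      min (((k₁ : ℝ) + 2 * k₂ + d) / 2) (d : ℝ) := by
  classical
  set Z : Finset ℝ := p.roots.toFinset.filter (· ∈ I)
  set B : Finset ℝ := univ.image s ∪ univ.image a ∪ univ.image b
  have hZ : {t ∈ I | p.eval t = 0} = Z := by
    ext t
    simp [Z, mem_roots hp, and_comm]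
  have hroots : ∀ t ∈ Z, p.IsRoot t := fun t ht =>
    (mem_roots hp).1 (Multiset.mem_toFinset.1 (Finset.mem_filter.1 ht).1)
  have hmult : ∀ t ∈ Z \ B, 1 < p.rootMultiplicity t := by
    intro t ht
    obtain ⟨htZ, htB⟩ := Finset.mem_sdiff.1 ht
    have hI_nhds : I ∈ nhds t := by
      subst hI hF
      refine mem_interior_iff_mem_nhds.1 (mem_interior_iUnion_singleton_Icc
        (Finset.mem_filter.1 htZ).2 ?_ ?_ ?_) <;>
      · rintro ⟨i, rfl⟩
        simp [B] at htB
    have hmin : IsMinOn (fun x => p.eval x) I t :=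
      isMinOn_iff.2 fun x hx => (hroots t htZ).eq_zero ▸ hnonneg x hx
    exact one_lt_rootMultiplicity_of_isLocalMin hp (hroots t htZ) (hmin.isLocalMin hI_nhds)
  have hcount := card_add_card_sdiff_le_natDegree hp hroots hmult
  have hZB := card_le_card_sdiff_add_card (s := Z) (t := B)
  have hB : #B ≤ k₁ + 2 * k₂ := by
    simpa only [Fintype.card_fin] using card_image_union_image_union_image_le s a b
  rw [hZ, Set.ncard_coe_finset, le_min_iff, le_div_iff₀ two_pos]
  constructor <;> norm_cast <;> omega

theorem card_zeros_le_of_nonneg_on_union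
    (p : Polynomial ℝ) (hp : p ≠ 0) (d k₁ k₂ : ℕ) (hdeg : p.natDegree = d)
    (s : Fin k₁ → ℝ) (a b : Fin k₂ → ℝ) (hab : ∀ i, a i < b i)
    (F : Fin k₁ ⊕ Fin k₂ → Set ℝ)
    (hF : F = Sum.elim (fun j => {s j}) (fun i => Set.Icc (a i) (b i)))
    (hdisj : Pairwise (Function.onFun Disjoint F))
    (I : Set ℝ) (hI : I = ⋃ i, F i)
    (hnonneg : ∀ t ∈ I, 0 ≤ p.eval t) :
    (({t ∈ I | p.eval t = 0}.ncard : ℝ)) ≤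
      min (((k₁ : ℝ) + 2 * k₂ + d) / 2) (d : ℝ) :=
  card_zeros_le_of_nonneg_on_union_general p hp d k₁ k₂ hdeg s a b F hF I hI hnonneg
end

section
/- For the linear homoscedastic model with f(t) = (1, t)ᵀ on I = [−1,1], the E-optimal design problem min{y : W ⪰ 0, tr(W) = 1, and the polynomial π(t) = (y − W₁₁) − 2W₁₂t − W₂₂t² is nonnegative on [−1,1]} has optimal value y = 1, and its optimal solution set is exactly {(y,W) : y = 1, W₁₂ = 0, W₁₁ + W₂₂ = 1, 0 ≤ W₁₁ ≤ 1}. -/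
/-
Evaluating the constraint at `t = 1` and `t = -1` and adding gives `2 (y - tr W) ≥ 0`, so `y ≥ 1`.
At `y = 1` the two evaluations are `-2 W₀₁` and `2 W₀₁`, which forces `W₀₁ = 0`; conversely, once
`W₀₁ = 0` the polynomial is `W₁₁ (1 - t²) ≥ 0` on `[-1, 1]`, and a diagonal matrix is positive
semidefinite exactly when its diagonal is nonnegative.
-/

open Matrix

namespace Matrix

theorem posSemidef_fin_two_iff_of_offDiag_eq_zero {R : Type*} [Ring R] [PartialOrder R]
    [StarRing R] [StarOrderedRing R] {W : Matrix (Fin 2) (Fin 2) R}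
    (h₀₁ : W 0 1 = 0) (h₁₀ : W 1 0 = 0) :
    W.PosSemidef ↔ 0 ≤ W 0 0 ∧ 0 ≤ W 1 1 := by
  have hW : W = diagonal ![W 0 0, W 1 1] := by
    ext i j
    fin_cases i <;> fin_cases j <;> simp [h₀₁, h₁₀]
  rw [hW, posSemidef_diagonal_iff, Fin.forall_fin_two]
  simp

end Matrix

def IsEOptimalFeasible (y : ℝ) (W : Matrix (Fin 2) (Fin 2) ℝ) : Prop :=
  W.PosSemidef ∧ W.trace = 1 ∧
    ∀ t ∈ Set.Icc (-1 : ℝ) 1, 0 ≤ (y - W 0 0) - 2 * W 0 1 * t - W 1 1 * t ^ 2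

namespace IsEOptimalFeasible

variable {y : ℝ} {W : Matrix (Fin 2) (Fin 2) ℝ}

theorem one_le (h : IsEOptimalFeasible y W) : 1 ≤ y := by
  obtain ⟨-, htr, hπ⟩ := h
  have hπ_pos := hπ 1 (by norm_num)
  have hπ_neg := hπ (-1) (by norm_num)
  rw [trace_fin_two] at htr
  linarith

theorem offDiag_eq_zero (h : IsEOptimalFeasible 1 W) : W 0 1 = 0 ∧ W 1 0 = 0 := by
  obtain ⟨hW, htr, hπ⟩ := h
  have hπ_pos := hπ 1 (by norm_num)
  have hπ_neg := hπ (-1) (by norm_num)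
  rw [trace_fin_two] at htr
  have h₀₁ : W 0 1 = 0 := by linarith
  have h₁₀ : W 1 0 = 0 := by simpa [h₀₁] using hW.isHermitian.apply 0 1
  exact ⟨h₀₁, h₁₀⟩

theorem one_iff : IsEOptimalFeasible 1 W ↔
    W 0 1 = 0 ∧ W 1 0 = 0 ∧ W 0 0 + W 1 1 = 1 ∧ 0 ≤ W 0 0 ∧ W 0 0 ≤ 1 := by
  constructor
  · intro h
    obtain ⟨h₀₁, h₁₀⟩ := h.offDiag_eq_zero
    obtain ⟨hW, htr, -⟩ := h
    rw [posSemidef_fin_two_iff_of_offDiag_eq_zero h₀₁ h₁₀] at hW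
    rw [trace_fin_two] at htr
    exact ⟨h₀₁, h₁₀, htr, hW.1, by linarith⟩
  · rintro ⟨h₀₁, h₁₀, htr, h₀₀, h₀₀_le⟩
    refine ⟨(posSemidef_fin_two_iff_of_offDiag_eq_zero h₀₁ h₁₀).2 ⟨h₀₀, by linarith⟩,
      by rwa [trace_fin_two], fun t ⟨ht₀, ht₁⟩ => ?_⟩
    have hπ : (1 - W 0 0) - 2 * W 0 1 * t - W 1 1 * t ^ 2 = W 1 1 * (1 - t ^ 2) := by
      linear_combination -htr - 2 * t * h₀₁
    rw [hπ]
    have ht : t ^ 2 ≤ 1 := by nlinarith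
    exact mul_nonneg (by linarith) (by linarith)

end IsEOptimalFeasible

theorem eoptimal_linear_model_solution_set :
    IsLeast {y : ℝ | ∃ W : Matrix (Fin 2) (Fin 2) ℝ, W.PosSemidef ∧ W.trace = 1 ∧
        ∀ t ∈ Set.Icc (-1 : ℝ) 1,
          0 ≤ (y - W 0 0) - 2 * W 0 1 * t - W 1 1 * t ^ 2} 1 ∧
      {p : ℝ × Matrix (Fin 2) (Fin 2) ℝ |
          (p.2.PosSemidef ∧ p.2.trace = 1 ∧
            ∀ t ∈ Set.Icc (-1 : ℝ) 1,
              0 ≤ (p.1 - p.2 0 0) - 2 * p.2 0 1 * t - p.2 1 1 * t ^ 2) ∧ p.1 = 1} =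
        {p : ℝ × Matrix (Fin 2) (Fin 2) ℝ |
          p.1 = 1 ∧ p.2 0 1 = 0 ∧ p.2 1 0 = 0 ∧ p.2 0 0 + p.2 1 1 = 1 ∧
            0 ≤ p.2 0 0 ∧ p.2 0 0 ≤ 1} := by
  refine ⟨⟨⟨!![1, 0; 0, 0], IsEOptimalFeasible.one_iff.2 (by norm_num)⟩,
    fun y ⟨W, hW⟩ => IsEOptimalFeasible.one_le hW⟩, ?_⟩
  ext ⟨y, W⟩
  change IsEOptimalFeasible y W ∧ y = 1 ↔ _
  constructor
  · rintro ⟨h, rfl⟩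
    exact ⟨rfl, IsEOptimalFeasible.one_iff.1 h⟩
  · rintro ⟨rfl, h⟩
    exact ⟨IsEOptimalFeasible.one_iff.2 h, rfl⟩
end

section
/- Let Φ(M) = λ_min(M) on positive semidefinite m×m matrices and let 𝓜 be a compact convex set of positive semidefinite matrices. Then max_{M ∈ 𝓜} λ_min(M) = min over positive semidefinite W with tr(W) = 1 of max_{M ∈ 𝓜} ⟨W, M⟩. -/
/-!
Weak duality: for `W ⪰ 0` with `tr W = 1`, `M - λ_min(M) • 1 ⪰ 0` gives
`tr(W M) - λ_min(M) = tr(W (M - λ_min(M) • 1)) ≥ 0`, since the trace pairing of two positive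
semidefinite matrices is nonnegative.

Strong duality: if `λ_min < c` on `𝓜`, then `𝓜` is disjoint from the closed convex set
`{X | X ⪰ c • 1}`, and Hahn–Banach separates them by a functional `tr(W ·)`. Being bounded below
on that set, the functional is nonnegative on its recession cone `{K | K ⪰ 0}`, which forces
`W ⪰ 0`; normalised to trace one, `W` satisfies `tr(W M) < c` on `𝓜`.
-/

open scoped MatrixOrder ComplexOrder

instance Matrix.instLocallyConvexSpace {m n 𝕜 E : Type*} [Semiring 𝕜] [PartialOrder 𝕜]
    [AddCommMonoid E] [TopologicalSpace E] [Module 𝕜 E] [LocallyConvexSpace 𝕜 E] :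
    LocallyConvexSpace 𝕜 (Matrix m n E) :=
  inferInstanceAs (LocallyConvexSpace 𝕜 (m → n → E))

theorem LinearMap.nonneg_of_forall_lt_add_smul {E : Type*} [AddCommGroup E] [Module ℝ E]
    (f : E →ₗ[ℝ] ℝ) {x K : E} {b : ℝ} (h : ∀ t : ℝ, 0 ≤ t → b < f (x + t • K)) : 0 ≤ f K := by
  by_contra! hK
  have hb : b < f x := by simpa using h 0 le_rfl
  have := h ((f x - b) / -f K) (div_nonneg (by linarith) (by linarith))
  rw [map_add, map_smul, smul_eq_mul, div_mul_eq_mul_div, div_neg,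
    mul_div_cancel_right₀ _ hK.ne] at this
  linarith

theorem csSup_eq_csInf_of_forall_le_of_forall_exists_le {α : Type*}
    [ConditionallyCompleteLinearOrder α] [DenselyOrdered α] {s t : Set α}
    (hs : s.Nonempty) (ht : t.Nonempty) (hle : ∀ a ∈ s, ∀ b ∈ t, a ≤ b)
    (hex : ∀ c, (∀ a ∈ s, a < c) → ∃ b ∈ t, b ≤ c) :
    sSup s = sInf t := by
  obtain ⟨a₀, ha₀⟩ := hs
  obtain ⟨b₀, hb₀⟩ := ht
  have hs_bdd : BddAbove s := ⟨b₀, fun a ha => hle a ha b₀ hb₀⟩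
  have ht_bdd : BddBelow t := ⟨a₀, hle a₀ ha₀⟩
  refine le_antisymm (csSup_le ⟨a₀, ha₀⟩ fun a ha => le_csInf ⟨b₀, hb₀⟩ (hle a ha)) ?_
  refine le_of_forall_gt_imp_ge_of_dense fun c hc => ?_
  obtain ⟨b, hb, hbc⟩ := hex c fun a ha => (le_csSup hs_bdd ha).trans_lt hc
  exact (csInf_le ht_bdd hb).trans hbc

namespace Matrix

variable {n : Type*} [Fintype n]

theorem exists_trace_mul_eq {R : Type*} [CommSemiring R] (f : Matrix n n R →ₗ[R] R) :
    ∃ W : Matrix n n R, ∀ X, f X = (W * X).trace := by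
  classical
  refine ⟨of fun i j => f (single j i 1), fun X => ?_⟩
  conv_lhs => rw [matrix_eq_sum_single X]
  simp only [map_sum, trace, mul_apply, diag_apply, of_apply]
  rw [Finset.sum_comm]
  refine Finset.sum_congr rfl fun i _ => Finset.sum_congr rfl fun j _ => ?_
  rw [show single j i (X j i) = X j i • single j i 1 by simp, map_smul, smul_eq_mul, mul_comm]

theorem IsHermitian.le_iInf_eigenvalues_iff {𝕜 : Type*} [RCLike 𝕜] [DecidableEq n] [Nonempty n]
    {A : Matrix n n 𝕜} (hA : A.IsHermitian) (c : ℝ) :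
    c ≤ ⨅ i, hA.eigenvalues i ↔ (A - c • 1).PosSemidef := by
  rw [le_ciInf_iff (Set.finite_range _).bddBelow, ← le_iff, ← Algebra.algebraMap_eq_smul_one,
    algebraMap_le_iff_le_spectrum (a := A) hA, hA.spectrum_real_eq_range_eigenvalues,
    Set.forall_mem_range]

theorem PosSemidef.trace_mul_nonneg {𝕜 : Type*} [RCLike 𝕜] {A B : Matrix n n 𝕜}
    (hA : A.PosSemidef) (hB : B.PosSemidef) : 0 ≤ (A * B).trace := by
  classical
  obtain ⟨C, rfl⟩ := CStarAlgebra.nonneg_iff_eq_star_mul_self.mp hA.nonneg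
  rw [mul_assoc, trace_mul_comm, mul_assoc, star_eq_conjTranspose]
  simpa only [mul_assoc] using (hB.mul_mul_conjTranspose_same C).trace_nonneg

theorem IsHermitian.iInf_eigenvalues_le_trace_mul [DecidableEq n] [Nonempty n]
    {A W : Matrix n n ℝ} (hA : A.IsHermitian) (hW : W.PosSemidef) (hW_trace : W.trace = 1) :
    ⨅ i, hA.eigenvalues i ≤ (W * A).trace := by
  have := hW.trace_mul_nonneg ((hA.le_iInf_eigenvalues_iff _).mp le_rfl)
  simpa [mul_sub, trace_sub, trace_smul, hW_trace] using this

/-- Non-symmetric matrices are deliberately allowed: a functional bounded below on this set then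
vanishes on antisymmetric matrices, which makes the separating matrix symmetric. -/
def quadFormLowerSet (c : ℝ) : Set (Matrix n n ℝ) :=
  {X | ∀ v, c * (v ⬝ᵥ v) ≤ v ⬝ᵥ X *ᵥ v}

theorem isClosed_quadFormLowerSet (c : ℝ) : IsClosed (quadFormLowerSet (n := n) c) := by
  simp only [quadFormLowerSet, Set.ofPred_forall]
  exact isClosed_iInter fun v => isClosed_le continuous_const (by fun_prop)

theorem convex_quadFormLowerSet (c : ℝ) : Convex ℝ (quadFormLowerSet (n := n) c) := by
  simp only [quadFormLowerSet, Set.ofPred_forall]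
  refine convex_iInter fun v => convex_halfSpace_ge ⟨fun X Y => ?_, fun a X => ?_⟩ _
  · simp [add_mulVec, dotProduct_add]
  · simp [smul_mulVec, dotProduct_smul]

theorem smul_one_mem_quadFormLowerSet [DecidableEq n] (c : ℝ) :
    c • (1 : Matrix n n ℝ) ∈ quadFormLowerSet c :=
  fun v => by simp [smul_mulVec, dotProduct_smul]

theorem add_mem_quadFormLowerSet {c : ℝ} {X K : Matrix n n ℝ} (hX : X ∈ quadFormLowerSet c)
    (hK : ∀ v, 0 ≤ v ⬝ᵥ K *ᵥ v) : X + K ∈ quadFormLowerSet c :=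
  fun v => by simpa [add_mulVec, dotProduct_add] using add_le_add (hX v) (hK v)

theorem IsHermitian.mem_quadFormLowerSet_iff [DecidableEq n] {A : Matrix n n ℝ}
    (hA : A.IsHermitian) (c : ℝ) : A ∈ quadFormLowerSet c ↔ (A - c • 1).PosSemidef := by
  rw [posSemidef_iff_dotProduct_mulVec]
  simp only [quadFormLowerSet, Set.mem_ofPred_eq, hA.sub (isHermitian_one.smul (.all c)),
    true_and, star_trivial, sub_mulVec, smul_mulVec, one_mulVec, dotProduct_sub, dotProduct_smul,
    smul_eq_mul, sub_nonneg]

theorem posSemidef_of_forall_trace_mul_nonneg {W : Matrix n n ℝ}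
    (h : ∀ K : Matrix n n ℝ, (∀ v, 0 ≤ v ⬝ᵥ K *ᵥ v) → 0 ≤ (W * K).trace) : W.PosSemidef := by
  classical
  refine posSemidef_iff_dotProduct_mulVec.mpr ⟨?_, fun v => ?_⟩
  · ext i j
    set K : Matrix n n ℝ := single j i 1 - single i j 1
    have hK_quad : ∀ v, v ⬝ᵥ K *ᵥ v = 0 := fun v => by
      simp only [K, sub_mulVec, dotProduct_sub, single_mulVec, ← Pi.single.eq_1,
        dotProduct_single]
      ring
    have h₁ := h K fun v => (hK_quad v).ge
    have h₂ := h (-K) fun v => by simp [neg_mulVec, hK_quad]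
    simp only [K, mul_sub, trace_sub, trace_mul_single, MulOpposite.op_one, one_smul, sub_nonneg,
      neg_sub] at h₁ h₂
    simpa using le_antisymm h₁ h₂
  · have hquad : v ⬝ᵥ W *ᵥ v = (W * vecMulVec v v).trace := by
      rw [mul_vecMulVec, trace_vecMulVec, dotProduct_comm]
    simpa [hquad] using h _ fun w => by
      simpa using (posSemidef_vecMulVec_self_star v).dotProduct_mulVec_nonneg w

theorem exists_posSemidef_trace_eq_one_forall_trace_mul_lt [DecidableEq n]
    {𝓜 : Set (Matrix n n ℝ)} (hne : 𝓜.Nonempty) (hcomp : IsCompact 𝓜) (hconv : Convex ℝ 𝓜)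
    {c : ℝ} (hdisj : Disjoint 𝓜 (quadFormLowerSet c)) :
    ∃ W : Matrix n n ℝ, W.PosSemidef ∧ W.trace = 1 ∧ ∀ M ∈ 𝓜, (W * M).trace < c := by
  obtain ⟨f, u, v, hfu, huv, hvf⟩ := geometric_hahn_banach_compact_closed hconv hcomp
    (convex_quadFormLowerSet c) (isClosed_quadFormLowerSet c) hdisj
  obtain ⟨W, hW⟩ := exists_trace_mul_eq (f : Matrix n n ℝ →ₗ[ℝ] ℝ)
  simp only [ContinuousLinearMap.coe_coe] at hW
  have hc := smul_one_mem_quadFormLowerSet (n := n) c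
  have hf_lt (M) (hM : M ∈ 𝓜) : f M < f (c • 1) := (hfu M hM).trans (huv.trans (hvf _ hc))
  have hW_psd : W.PosSemidef := posSemidef_of_forall_trace_mul_nonneg fun K hK => by
    rw [← hW]
    refine (f : Matrix n n ℝ →ₗ[ℝ] ℝ).nonneg_of_forall_lt_add_smul fun t ht =>
      hvf _ (add_mem_quadFormLowerSet hc fun x => ?_)
    simpa [smul_mulVec, dotProduct_smul] using mul_nonneg ht (hK x)
  have hW_trace : 0 < W.trace := by
    refine hW_psd.trace_nonneg.lt_of_ne fun h0 => ?_
    obtain ⟨M₀, hM₀⟩ := hne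
    have := hf_lt M₀ hM₀
    rw [hW, hW, hW_psd.trace_eq_zero_iff.mp h0.symm] at this
    simp at this
  refine ⟨W.trace⁻¹ • W, hW_psd.smul (inv_nonneg.mpr hW_trace.le),
    by simp [trace_smul, hW_trace.ne'], fun M hM => ?_⟩
  have := hf_lt M hM
  rw [hW, hW, Matrix.mul_smul, mul_one, trace_smul, smul_eq_mul] at this
  rwa [smul_mul, trace_smul, smul_eq_mul, inv_mul_lt_iff₀ hW_trace, mul_comm]

end Matrix

open Matrix

theorem eoptimal_strong_duality
    {m : ℕ} (hm : 0 < m) (𝓜 : Set (Matrix (Fin m) (Fin m) ℝ)) (hne : 𝓜.Nonempty)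
    (hcomp : IsCompact 𝓜) (hconv : Convex ℝ 𝓜) (hpsd : ∀ M ∈ 𝓜, M.PosSemidef) :
    sSup {x : ℝ | ∃ M, ∃ hM : M ∈ 𝓜, x = ⨅ i, (hpsd M hM).1.eigenvalues i} =
      sInf {x : ℝ | ∃ W : Matrix (Fin m) (Fin m) ℝ, W.PosSemidef ∧ W.trace = 1 ∧
        x = sSup {y : ℝ | ∃ M ∈ 𝓜, y = (W * M).trace}} := by
  have : Nonempty (Fin m) := ⟨⟨0, hm⟩⟩
  have hbdd (W : Matrix (Fin m) (Fin m) ℝ) : BddAbove {y : ℝ | ∃ M ∈ 𝓜, y = (W * M).trace} := by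
    simpa [Set.image, eq_comm] using
      (hcomp.image (f := fun M => (W * M).trace) (by fun_prop)).bddAbove
  have hW₀ : ((m : ℝ)⁻¹ • 1 : Matrix (Fin m) (Fin m) ℝ).PosSemidef :=
    PosSemidef.one.smul (by positivity)
  have hW₀_trace : ((m : ℝ)⁻¹ • 1 : Matrix (Fin m) (Fin m) ℝ).trace = 1 := by
    simp [trace_smul, hm.ne']
  obtain ⟨M₀, hM₀⟩ := hne
  refine csSup_eq_csInf_of_forall_le_of_forall_exists_le ⟨_, M₀, hM₀, rfl⟩
    ⟨_, _, hW₀, hW₀_trace, rfl⟩ ?_ ?_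
  · rintro _ ⟨M, hM, rfl⟩ _ ⟨W, hW, hW_trace, rfl⟩
    exact ((hpsd M hM).1.iInf_eigenvalues_le_trace_mul hW hW_trace).trans
      (le_csSup (hbdd W) ⟨M, hM, rfl⟩)
  · intro c hc
    have hdisj : Disjoint 𝓜 (quadFormLowerSet c) := Set.disjoint_left.mpr fun M hM hMc =>
      (hc _ ⟨M, hM, rfl⟩).not_ge <| ((hpsd M hM).1.le_iInf_eigenvalues_iff c).mpr <|
        ((hpsd M hM).1.mem_quadFormLowerSet_iff c).mp hMc
    obtain ⟨W, hW, hW_trace, hlt⟩ :=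
      exists_posSemidef_trace_eq_one_forall_trace_mul_lt ⟨M₀, hM₀⟩ hcomp hconv hdisj
    exact ⟨_, ⟨W, hW, hW_trace, rfl⟩,
      csSup_le ⟨_, M₀, hM₀, rfl⟩ fun _ ⟨M, hM, h⟩ => h ▸ (hlt M hM).le⟩
end
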